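/- arXiv:2411.14237 — 5 statements merged into one kernel-verified Lean document; each statement's English description precedes it below -/
import Mathlib

section
/- Let λ₁,...,λₙ > 0 and let Γ be any lattice of the oscillator group Osc_n(λ₁,...,λₙ). Then there exists a closed spacelike geodesic in the quotient: there exist X = (d, (b₁,c₁,...,bₙ,cₙ), a) with Q(X) = 2ad + Σ_k (b_k²+c_k²)/λ_k > 0 and s > 0 such that γ_X(s) ∈ Γ. -/
open Real

noncomputable section

/-- rotation by angle `θ` acting on `ℝ × ℝ` -/
def rot (θ : ℝ) (p : ℝ × ℝ) : ℝ × ℝ :=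
  (Real.cos θ * p.1 - Real.sin θ * p.2, Real.sin θ * p.1 + Real.cos θ * p.2)

/-- the matrix `[[0,1],[-1,0]]` acting on `ℝ × ℝ` -/
def Jpair (p : ℝ × ℝ) : ℝ × ℝ := (p.2, -p.1)

/-- euclidean inner product on `ℝ × ℝ` -/
def dot2 (p q : ℝ × ℝ) : ℝ := p.1 * q.1 + p.2 * q.2

/-- underlying set `ℝ × ℝ^{2n} × ℝ` of the oscillator group, where the middle
factor `ℝ^{2n}` is recorded as `n` pairs `(x_i, y_i)`. -/
abbrev OscG (n : ℕ) := ℝ × (Fin n → ℝ × ℝ) × ℝ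

/-- multiplication of the oscillator group `Osc_n(λ₁,…,λₙ)`:
`(z₁,v₁,t₁)·(z₂,v₂,t₂) = (z₁+z₂+½ v₁ᵀ J R(t₁) v₂, v₁ + R(t₁)v₂, t₁+t₂)`,
where `R(t)` rotates the `i`-th pair by the angle `λ_i t`. -/
def oscMul {n : ℕ} (lam : Fin n → ℝ) (g h : OscG n) : OscG n :=
  (g.1 + h.1 + (1/2) * ∑ i, dot2 (g.2.1 i) (Jpair (rot (lam i * g.2.2) (h.2.1 i))),
   fun i => g.2.1 i + rot (lam i * g.2.2) (h.2.1 i),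
   g.2.2 + h.2.2)

/-- identity element of the oscillator group -/
def oscOne (n : ℕ) : OscG n := (0, fun _ => (0, 0), 0)

/-- inverse in the oscillator group: `(z,v,t)⁻¹ = (-z, -R(-t)v, -t)` -/
def oscInv {n : ℕ} (lam : Fin n → ℝ) (g : OscG n) : OscG n :=
  (-g.1, fun i => -(rot (lam i * (-g.2.2)) (g.2.1 i)), -g.2.2)

/-- `Γ` is a lattice of the oscillator group: a discrete subgroup with compact
quotient (the quotient by the right multiplication action of `Γ`). -/
structure IsLattice {n : ℕ} (lam : Fin n → ℝ) (Γ : Set (OscG n)) : Prop where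
  one_mem : oscOne n ∈ Γ
  mul_mem : ∀ g ∈ Γ, ∀ h ∈ Γ, oscMul lam g h ∈ Γ
  inv_mem : ∀ g ∈ Γ, oscInv lam g ∈ Γ
  discrete : DiscreteTopology Γ
  cocompact : CompactSpace (Quot (fun g h : OscG n => ∃ γ ∈ Γ, h = oscMul lam g γ))

/-- `Q(X) = 2ad + Σ_k (b_k² + c_k²)/λ_k` for `X = (d,(b₁,c₁,…,bₙ,cₙ),a)` -/
def Qform {n : ℕ} (lam : Fin n → ℝ) (d a : ℝ) (b c : Fin n → ℝ) : ℝ :=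
  2 * a * d + ∑ k, (b k ^ 2 + c k ^ 2) / lam k

/-- the geodesic through the identity with initial velocity
`X = (d,(b₁,c₁,…,bₙ,cₙ),a)` for the bi-invariant Lorentzian metric on the
oscillator group. -/
def geo {n : ℕ} (lam : Fin n → ℝ) (d : ℝ) (b c : Fin n → ℝ) (a : ℝ) (s : ℝ) : OscG n :=
  if a = 0 then (d * s, fun j => (b j * s, c j * s), 0)
  else
    ((d + (1/(2*a)) * ∑ k, (b k ^ 2 + c k ^ 2) / lam k) * s
        - (1/(2*a^2)) * ∑ k, ((b k ^ 2 + c k ^ 2) / (lam k)^2) * Real.sin (lam k * a * s),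
     fun j => ((1/(a * lam j)) * (b j * Real.sin (lam j * a * s)
                  + c j * Real.cos (lam j * a * s) - c j),
               (1/(a * lam j)) * (-(b j) * Real.cos (lam j * a * s)
                  + c j * Real.sin (lam j * a * s) + b j)),
     a * s)

/-!
For `n = 0` the group is abelian, and an element of `Γ` with positive `z` and `t` lies on a
spacelike one-parameter subgroup. For `n > 0` it suffices to find `γ ∈ Γ` with `t(γ) = 0` and
`v_j(γ) ≠ 0`, since it lies on the spacelike geodesic with `a = 0`. If there were none, `v_j`
would be a function of `t` on `Γ`. Cocompactness yields elements of `Γ` with `|t| ≤ R` and `v_j`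
within `R` of any point of the plane, so `v_j` is unbounded on them. But if some `h ∈ Γ` rotates
the `j`-th plane nontrivially, comparing `gh` with `hg` gives `(1 - R_h) v_g = (1 - R_g) v_h`,
which bounds every `v_j(g)`; otherwise `λ_j t ∈ 2πℤ` on `Γ`, and only finitely many such `t`
lie in `[-R, R]`.
-/

section Plane

@[simp] lemma rot_zero (p : ℝ × ℝ) : rot 0 p = p := by simp [rot]

lemma rot_rot (θ φ : ℝ) (p : ℝ × ℝ) : rot θ (rot φ p) = rot (θ + φ) p := by
  simp only [rot, cos_add, sin_add, Prod.mk.injEq]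
  constructor <;> ring

lemma rot_add (θ : ℝ) (p q : ℝ × ℝ) : rot θ (p + q) = rot θ p + rot θ q := by
  simp only [rot, Prod.fst_add, Prod.snd_add, Prod.mk_add_mk, Prod.mk.injEq]
  constructor <;> ring

lemma rot_neg (θ : ℝ) (p : ℝ × ℝ) : rot θ (-p) = -rot θ p := by
  simp only [rot, Prod.fst_neg, Prod.snd_neg, Prod.neg_mk, Prod.mk.injEq]
  constructor <;> ring

lemma dot2_self_nonneg (p : ℝ × ℝ) : 0 ≤ dot2 p p := by
  unfold dot2; nlinarith [mul_self_nonneg p.1, mul_self_nonneg p.2]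

lemma dot2_self_pos {p : ℝ × ℝ} (hp : p ≠ 0) : 0 < dot2 p p := by
  refine (dot2_self_nonneg p).lt_of_ne' fun h => hp ?_
  unfold dot2 at h
  have h1 : p.1 = 0 := by nlinarith [mul_self_nonneg p.1, mul_self_nonneg p.2]
  have h2 : p.2 = 0 := by nlinarith [mul_self_nonneg p.1, mul_self_nonneg p.2]
  exact Prod.ext h1 h2

lemma dot2_sub_rot_self (θ : ℝ) (p : ℝ × ℝ) :
    dot2 (p - rot θ p) (p - rot θ p) = (2 - 2 * cos θ) * dot2 p p := by
  simp only [dot2, rot, Prod.fst_sub, Prod.snd_sub]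
  linear_combination (p.1 ^ 2 + p.2 ^ 2) * sin_sq_add_cos_sq θ

lemma norm_le_of_dot2_self_le {p : ℝ × ℝ} {C : ℝ} (h : dot2 p p ≤ C ^ 2) (hC : 0 ≤ C) :
    ‖p‖ ≤ C := by
  unfold dot2 at h
  refine norm_prod_le_iff.2 ⟨?_, ?_⟩ <;> rw [Real.norm_eq_abs] <;>
    refine abs_le_of_sq_le_sq ?_ hC <;> nlinarith [mul_self_nonneg p.1, mul_self_nonneg p.2]

/-- Holds because rotations preserve the symplectic form `dot2 · (Jpair ·)`. -/
lemma dot2_Jpair_cocycle (θ φ : ℝ) (p q r : ℝ × ℝ) :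
    dot2 p (Jpair (rot θ q)) + dot2 (p + rot θ q) (Jpair (rot (θ + φ) r))
      = dot2 q (Jpair (rot φ r)) + dot2 p (Jpair (rot θ (q + rot φ r))) := by
  simp only [dot2, Jpair, rot, cos_add, sin_add, Prod.fst_add, Prod.snd_add]
  linear_combination (q.1 * (sin φ * r.1 + cos φ * r.2) - q.2 * (cos φ * r.1 - sin φ * r.2))
    * sin_sq_add_cos_sq θ

end Plane

section Group

variable {n : ℕ} (lam : Fin n → ℝ)

@[simp] lemma oscMul_snd_snd (g h : OscG n) : (oscMul lam g h).2.2 = g.2.2 + h.2.2 := rfl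

@[simp] lemma oscMul_snd_fst (g h : OscG n) (i : Fin n) :
    (oscMul lam g h).2.1 i = g.2.1 i + rot (lam i * g.2.2) (h.2.1 i) := rfl

lemma oscMul_assoc (g h k : OscG n) :
    oscMul lam (oscMul lam g h) k = oscMul lam g (oscMul lam h k) := by
  simp only [oscMul, Prod.mk.injEq, mul_add]
  refine ⟨?_, funext fun i => by rw [rot_add, ← rot_rot, add_assoc], by ring⟩
  linear_combination (1 / 2 : ℝ) * (Finset.sum_add_distrib.symm.trans
    (Finset.sum_congr rfl fun i _ => dot2_Jpair_cocycle (lam i * g.2.2) (lam i * h.2.2)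
      (g.2.1 i) (h.2.1 i) (k.2.1 i))).trans Finset.sum_add_distrib

lemma oscMul_oscOne (g : OscG n) : oscMul lam g (oscOne n) = g := by
  simp [oscMul, oscOne, rot, dot2, Jpair, Prod.mk_zero_zero]

lemma oscOne_oscMul (g : OscG n) : oscMul lam (oscOne n) g = g := by
  simp [oscMul, oscOne, dot2, Prod.mk_zero_zero]

lemma oscMul_oscInv (g : OscG n) : oscMul lam g (oscInv lam g) = oscOne n := by
  have hrot : ∀ i, rot (lam i * g.2.2) (-rot (lam i * -g.2.2) (g.2.1 i)) = -g.2.1 i := fun i => by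
    rw [rot_neg, rot_rot, ← mul_add, add_neg_cancel, mul_zero, rot_zero]
  simp only [oscMul, oscInv, oscOne, hrot]
  simp [dot2, Jpair, mul_comm, Prod.mk_zero_zero]

lemma oscMul_oscInv_cancel_left (g h : OscG n) :
    oscMul lam g (oscMul lam (oscInv lam g) h) = h := by
  rw [← oscMul_assoc, oscMul_oscInv, oscOne_oscMul]

lemma oscMul_oscInv_cancel_right (g h : OscG n) :
    oscMul lam (oscMul lam g h) (oscInv lam h) = g := by
  rw [oscMul_assoc, oscMul_oscInv, oscMul_oscOne]

lemma oscMul_oscInv_snd_snd (g h : OscG n) : (oscMul lam g (oscInv lam h)).2.2 = g.2.2 - h.2.2 :=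
  (sub_eq_add_neg _ _).symm

lemma oscMul_oscInv_snd_fst (g h : OscG n) (i : Fin n) :
    (oscMul lam g (oscInv lam h)).2.1 i = g.2.1 i - rot (lam i * (g.2.2 - h.2.2)) (h.2.1 i) := by
  rw [oscMul_snd_fst, oscInv, rot_neg, rot_rot, ← mul_add, ← sub_eq_add_neg, ← sub_eq_add_neg]

lemma continuous_oscMul_const (γ : OscG n) : Continuous fun g : OscG n => oscMul lam g γ := by
  unfold oscMul rot dot2 Jpair
  fun_prop

end Group

lemma not_isBounded_of_forall_exists_dist_le {E : Type*} [NormedAddCommGroup E] [NormedSpace ℝ E]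
    [Nontrivial E] {S : Set E} {R : ℝ} (h : ∀ p, ∃ x ∈ S, dist x p ≤ R) :
    ¬Bornology.IsBounded S := fun hS =>
  NormedSpace.unbounded_univ ℝ E <| hS.cthickening.subset fun p _ =>
    let ⟨x, hx, hxp⟩ := h p
    Metric.mem_cthickening_of_dist_le p x R S hx (by rwa [dist_comm])

lemma finite_setOf_abs_le_cos_mul_eq_one {a : ℝ} (ha : a ≠ 0) (R : ℝ) :
    {t : ℝ | |t| ≤ R ∧ cos (a * t) = 1}.Finite := by
  have hperiod : 2 * π / a ≠ 0 := div_ne_zero (by positivity) ha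
  refine ((tendsto_cofinite_cocompact_iff.1 (Int.tendsto_zmultiplesHom_cofinite hperiod) _
    (isCompact_Icc (a := -R) (b := R))).image (zmultiplesHom ℝ (2 * π / a))).subset ?_
  rintro t ⟨ht, hcos⟩
  obtain ⟨k, hk⟩ := (cos_eq_one_iff _).1 hcos
  have htk : zmultiplesHom ℝ (2 * π / a) k = t := by
    rw [zmultiplesHom_apply, zsmul_eq_mul]
    field_simp
    linarith
  exact ⟨k, by simpa [htk] using abs_le.1 ht, htk⟩

section Lattice

variable {n : ℕ} {lam : Fin n → ℝ} {Γ : Set (OscG n)}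

/-- The coset relation `h ∈ gΓ` of `IsLattice.cocompact`. -/
def oscRel (lam : Fin n → ℝ) (Γ : Set (OscG n)) (g h : OscG n) : Prop :=
  ∃ γ ∈ Γ, h = oscMul lam g γ

lemma IsLattice.equivalence_oscRel (hΓ : IsLattice lam Γ) : Equivalence (oscRel lam Γ) where
  refl g := ⟨oscOne n, hΓ.one_mem, (oscMul_oscOne lam g).symm⟩
  symm := by
    rintro g _ ⟨γ, hγ, rfl⟩
    exact ⟨oscInv lam γ, hΓ.inv_mem γ hγ, (oscMul_oscInv_cancel_right lam g γ).symm⟩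
  trans := by
    rintro g _ _ ⟨γ, hγ, rfl⟩ ⟨δ, hδ, rfl⟩
    exact ⟨oscMul lam γ δ, hΓ.mul_mem γ hγ δ hδ, oscMul_assoc lam g γ δ⟩

lemma IsLattice.oscRel_of_quot_mk_eq (hΓ : IsLattice lam Γ) {g h : OscG n}
    (hgh : Quot.mk (oscRel lam Γ) g = Quot.mk (oscRel lam Γ) h) : oscRel lam Γ g h :=
  hΓ.equivalence_oscRel.eqvGen_iff.1 (Quot.eqvGen_exact hgh)

lemma IsLattice.isOpenMap_quot_mk (hΓ : IsLattice lam Γ) :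
    IsOpenMap (Quot.mk (oscRel lam Γ)) := by
  intro U hU
  have hsat : Quot.mk (oscRel lam Γ) ⁻¹' (Quot.mk (oscRel lam Γ) '' U)
      = ⋃ γ ∈ Γ, (fun g => oscMul lam g γ) ⁻¹' U := by
    ext g
    simp only [Set.mem_preimage, Set.mem_image, Set.mem_iUnion]
    constructor
    · rintro ⟨u, hu, hug⟩
      obtain ⟨γ, hγ, rfl⟩ := hΓ.oscRel_of_quot_mk_eq hug
      exact ⟨oscInv lam γ, hΓ.inv_mem γ hγ, by rwa [oscMul_oscInv_cancel_right]⟩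
    · rintro ⟨γ, hγ, hg⟩
      exact ⟨_, hg, (Quot.sound ⟨γ, hγ, rfl⟩).symm⟩
  rw [← isQuotientMap_quot_mk.isOpen_preimage, hsat]
  exact isOpen_biUnion fun γ _ => hU.preimage (continuous_oscMul_const lam γ)

lemma IsLattice.exists_mul_mem (hΓ : IsLattice lam Γ) :
    ∃ R, ∀ P : OscG n, ∃ u, ‖u‖ ≤ R ∧ oscMul lam P u ∈ Γ := by
  have : CompactSpace (Quot (oscRel lam Γ)) := hΓ.cocompact
  obtain ⟨m, hm⟩ := isCompact_univ.elim_directed_cover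
    (fun m : ℕ => Quot.mk (oscRel lam Γ) '' Metric.ball 0 m)
    (fun m => hΓ.isOpenMap_quot_mk _ Metric.isOpen_ball)
    (fun q _ => by
      obtain ⟨g, rfl⟩ := Quot.exists_rep q
      refine Set.mem_iUnion.2 ⟨⌈‖g‖⌉₊ + 1, g, mem_ball_zero_iff.2 ?_, rfl⟩
      push_cast
      linarith [Nat.le_ceil ‖g‖])
    (Monotone.directed_le fun a b hab =>
      Set.image_mono (Metric.ball_subset_ball (by exact_mod_cast hab)))
  refine ⟨m, fun P => ?_⟩
  obtain ⟨u, hu, hPu⟩ := hm (Set.mem_univ (Quot.mk _ (oscInv lam P)))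
  obtain ⟨γ, hγ, rfl⟩ := hΓ.oscRel_of_quot_mk_eq hPu.symm
  exact ⟨_, (mem_ball_zero_iff.1 hu).le, by rwa [oscMul_oscInv_cancel_left]⟩

lemma IsLattice.exists_fst_pos_snd_snd_pos (hΓ : IsLattice lam Γ) :
    ∃ γ ∈ Γ, 0 < γ.1 ∧ 0 < γ.2.2 := by
  obtain ⟨R, hR⟩ := hΓ.exists_mul_mem
  obtain ⟨u, hu, hγ⟩ := hR (R + 1, 0, R + 1)
  refine ⟨_, hγ, ?_, ?_⟩
  · have hu1 : |u.1| ≤ R := (norm_fst_le u).trans hu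
    simp only [oscMul, Pi.zero_apply, dot2, Prod.fst_zero, Prod.snd_zero, zero_mul, zero_add,
      Finset.sum_const_zero, mul_zero, add_zero]
    linarith [neg_abs_le u.1]
  · have hu2 : |u.2.2| ≤ R := (norm_snd_le u.2).trans ((norm_snd_le u).trans hu)
    simp only [oscMul_snd_snd]
    linarith [neg_abs_le u.2.2]

lemma IsLattice.exists_dist_snd_fst_le (hΓ : IsLattice lam Γ) (j : Fin n) :
    ∃ R, ∀ p : ℝ × ℝ, ∃ γ ∈ Γ, |γ.2.2| ≤ R ∧ dist (γ.2.1 j) p ≤ R := by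
  obtain ⟨R, hR⟩ := hΓ.exists_mul_mem
  refine ⟨R, fun p => ?_⟩
  obtain ⟨u, hu, hγ⟩ := hR (0, Pi.single j p, 0)
  refine ⟨_, hγ, ?_, ?_⟩
  · rw [oscMul_snd_snd, zero_add]
    exact (norm_snd_le u.2).trans ((norm_snd_le u).trans hu)
  · dsimp only [oscMul_snd_fst]
    rw [Pi.single_eq_same, mul_zero, rot_zero, dist_eq_norm, add_sub_cancel_left]
    exact (norm_le_pi_norm u.2.1 j).trans ((norm_fst_le u.2).trans ((norm_snd_le u).trans hu))

variable {j : Fin n}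

lemma IsLattice.snd_fst_eq_of_snd_snd_eq (hΓ : IsLattice lam Γ)
    (H : ∀ γ ∈ Γ, γ.2.2 = 0 → γ.2.1 j = 0) {g h : OscG n} (hg : g ∈ Γ) (hh : h ∈ Γ)
    (hgh : g.2.2 = h.2.2) : g.2.1 j = h.2.1 j := by
  have := H _ (hΓ.mul_mem g hg _ (hΓ.inv_mem h hh)) (by rw [oscMul_oscInv_snd_snd, hgh, sub_self])
  rwa [oscMul_oscInv_snd_fst, hgh, sub_self, mul_zero, rot_zero, sub_eq_zero] at this

lemma IsLattice.isBounded_of_cos_ne_one (hΓ : IsLattice lam Γ)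
    (H : ∀ γ ∈ Γ, γ.2.2 = 0 → γ.2.1 j = 0) {h : OscG n} (hh : h ∈ Γ)
    (hcos : cos (lam j * h.2.2) ≠ 1) : Bornology.IsBounded {x | ∃ γ ∈ Γ, γ.2.1 j = x} := by
  have hc : 0 < 2 - 2 * cos (lam j * h.2.2) := by linarith [(cos_le_one _).lt_of_ne hcos]
  refine isBounded_iff_forall_norm_le.2
    ⟨√(4 * dot2 (h.2.1 j) (h.2.1 j) / (2 - 2 * cos (lam j * h.2.2))), ?_⟩
  rintro _ ⟨g, hg, rfl⟩
  have hcomm : g.2.1 j - rot (lam j * h.2.2) (g.2.1 j) = h.2.1 j - rot (lam j * g.2.2) (h.2.1 j) :=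
    sub_eq_sub_iff_add_eq_add.2 <| by
      simpa using hΓ.snd_fst_eq_of_snd_snd_eq H (hΓ.mul_mem g hg h hh) (hΓ.mul_mem h hh g hg)
        (add_comm _ _)
  have hbound : (2 - 2 * cos (lam j * h.2.2)) * dot2 (g.2.1 j) (g.2.1 j)
      ≤ 4 * dot2 (h.2.1 j) (h.2.1 j) := by
    rw [← dot2_sub_rot_self, hcomm, dot2_sub_rot_self]
    nlinarith [neg_one_le_cos (lam j * g.2.2), dot2_self_nonneg (h.2.1 j)]
  refine norm_le_of_dot2_self_le ?_ (sqrt_nonneg _)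
  rw [sq_sqrt (div_nonneg (by linarith [dot2_self_nonneg (h.2.1 j)]) hc.le), le_div_iff₀ hc]
  linarith

lemma IsLattice.finite_of_cos_eq_one (hΓ : IsLattice lam Γ)
    (H : ∀ γ ∈ Γ, γ.2.2 = 0 → γ.2.1 j = 0) (hlam : lam j ≠ 0)
    (hcos : ∀ γ ∈ Γ, cos (lam j * γ.2.2) = 1) (R : ℝ) :
    {x | ∃ γ ∈ Γ, |γ.2.2| ≤ R ∧ γ.2.1 j = x}.Finite := by
  refine ((finite_setOf_abs_le_cos_mul_eq_one hlam R).biUnion fun t _ =>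
    (?_ : Set.Subsingleton {x | ∃ γ ∈ Γ, γ.2.2 = t ∧ γ.2.1 j = x}).finite).subset ?_
  · rintro _ ⟨g, hg, hgt, rfl⟩ _ ⟨h, hh, hht, rfl⟩
    exact hΓ.snd_fst_eq_of_snd_snd_eq H hg hh (hgt.trans hht.symm)
  · rintro _ ⟨γ, hγ, hR, rfl⟩
    exact Set.mem_biUnion ⟨hR, hcos γ hγ⟩ ⟨γ, hγ, rfl, rfl⟩

theorem IsLattice.exists_snd_snd_eq_zero_snd_fst_ne_zero (hΓ : IsLattice lam Γ)
    (hlam : lam j ≠ 0) : ∃ γ ∈ Γ, γ.2.2 = 0 ∧ γ.2.1 j ≠ 0 := by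
  by_contra! H
  obtain ⟨R, hR⟩ := hΓ.exists_dist_snd_fst_le j
  refine not_isBounded_of_forall_exists_dist_le
    (S := {x | ∃ γ ∈ Γ, |γ.2.2| ≤ R ∧ γ.2.1 j = x}) (R := R) (fun p => ?_) ?_
  · obtain ⟨γ, hγ, ht, hd⟩ := hR p
    exact ⟨_, ⟨γ, hγ, ht, rfl⟩, hd⟩
  by_cases hcos : ∃ h ∈ Γ, cos (lam j * h.2.2) ≠ 1
  · obtain ⟨h, hh, hc⟩ := hcos
    exact (hΓ.isBounded_of_cos_ne_one H hh hc).subset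
      fun _ ⟨γ, hγ, _, hx⟩ => ⟨γ, hγ, hx⟩
  · push Not at hcos
    exact (hΓ.finite_of_cos_eq_one H hlam hcos R).isBounded

end Lattice

/-- For any lattice `Γ` of `Osc_n(λ₁,…,λₙ)` there is a closed spacelike geodesic
in the quotient. -/
theorem stmt_3 {n : ℕ} (lam : Fin n → ℝ) (hlam : ∀ i, 0 < lam i)
    (Γ : Set (OscG n)) (hΓ : IsLattice lam Γ) :
    ∃ (d a : ℝ) (b c : Fin n → ℝ),
      Qform lam d a b c > 0 ∧ ∃ s > (0 : ℝ), geo lam d b c a s ∈ Γ := by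
  rcases isEmpty_or_nonempty (Fin n) with hn | ⟨⟨j⟩⟩
  · obtain ⟨γ, hγ, hz, ht⟩ := hΓ.exists_fst_pos_snd_snd_pos
    refine ⟨γ.1, γ.2.2, 0, 0, by simp [Qform]; positivity, 1, one_pos, ?_⟩
    convert hγ using 1
    simp only [geo, ht.ne', if_false, Finset.univ_eq_empty, Finset.sum_empty]
    exact Prod.ext (by ring) (Prod.ext (funext isEmptyElim) (mul_one _))
  · obtain ⟨γ, hγ, ht, hv⟩ := hΓ.exists_snd_snd_eq_zero_snd_fst_ne_zero (hlam j).ne'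
    refine ⟨γ.1, 0, fun k => (γ.2.1 k).1, fun k => (γ.2.1 k).2, ?_, 1, one_pos, ?_⟩
    · have hv' : 0 < (γ.2.1 j).1 ^ 2 + (γ.2.1 j).2 ^ 2 := by
        simpa [dot2, sq] using dot2_self_pos hv
      simp only [Qform, mul_zero, zero_mul, zero_add, gt_iff_lt]
      exact Finset.sum_pos' (fun k _ => div_nonneg (by positivity) (hlam k).le)
        ⟨j, Finset.mem_univ j, div_pos hv' (hlam j)⟩
    · convert hγ using 1
      simp only [geo, if_true, mul_one]
      exact Prod.ext rfl (Prod.ext rfl ht.symm)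
end
end

section
/- Let λ₁,...,λₙ > 0 and let Γ be any lattice of the oscillator group Osc_n(λ₁,...,λₙ). Then there exists a non-closed (open) timelike geodesic in the quotient: there exists X = (d, (b₁,c₁,...,bₙ,cₙ), a) with Q(X) = 2ad + Σ_k (b_k²+c_k²)/λ_k < 0 such that γ_X(s) ∉ Γ for every s > 0. -/
open Real

noncomputable section

/-- For any lattice `Γ` of `Osc_n(λ₁,…,λₙ)` there is a non-closed (open)
timelike geodesic in the quotient. -/
theorem stmt_4 {n : ℕ} (lam : Fin n → ℝ) (hlam : ∀ i, 0 < lam i)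
    (Γ : Set (OscG n)) (hΓ : IsLattice lam Γ) :
    ∃ (d a : ℝ) (b c : Fin n → ℝ),
      Qform lam d a b c < 0 ∧ ∀ s > (0 : ℝ), geo lam d b c a s ∉ Γ := by
  -- Γ is countable: a discrete subspace of a second-countable space
  have hcount : Γ.Countable := by
    haveI := hΓ.discrete
    rw [← Set.countable_coe_iff]
    exact (TopologicalSpace.separableSpace_iff_countable).1 inferInstance
  -- the set of "bad" slopes a, for which the ray s ↦ (-s, 0, a s) hits Γ
  have hbad : {a : ℝ | ∃ s > (0:ℝ), ((-s, fun _ => (0,0), a*s) : OscG n) ∈ Γ}.Countable := by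
    have : {a : ℝ | ∃ s > (0:ℝ), ((-s, fun _ => (0,0), a*s) : OscG n) ∈ Γ}
        ⊆ (fun g : OscG n => g.2.2 / (-g.1)) '' Γ := by
      rintro a ⟨s, hs, hmem⟩
      refine ⟨(-s, fun _ => (0,0), a*s), hmem, ?_⟩
      simp only [neg_neg]
      field_simp
    exact (hcount.image _).mono this
  -- pick a good positive slope
  obtain ⟨a, ha, hgood⟩ : ∃ a > (0:ℝ),
      a ∉ {a : ℝ | ∃ s > (0:ℝ), ((-s, fun _ => (0,0), a*s) : OscG n) ∈ Γ} := by
    by_contra h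
    push_neg at h
    have : Set.Ioi (0:ℝ) ⊆ {a : ℝ | ∃ s > (0:ℝ), ((-s, fun _ => (0,0), a*s) : OscG n) ∈ Γ} :=
      fun a haa => h a haa
    have h2 : (Set.univ : Set ℝ).Countable := by
      have h3 := ((hbad.mono this).preimage Real.exp_injective)
      refine h3.mono fun x _ => ?_
      exact Real.exp_pos x
    exact Cardinal.not_countable_real h2
  refine ⟨-1, a, 0, 0, ?_, ?_⟩
  · simp [Qform]
    nlinarith
  · intro s hs hmem
    have hne : a ≠ 0 := ne_of_gt ha
    have : geo lam (-1) 0 0 a s = ((-s, fun _ => (0,0), a*s) : OscG n) := by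
      simp [geo, hne]
    rw [this] at hmem
    exact hgood ⟨s, hs, hmem⟩
end
end

section
/- Let λ₁,...,λₙ > 0 and let Γ be any lattice of the oscillator group Osc_n(λ₁,...,λₙ). Then there exists a non-closed (open) spacelike geodesic in the quotient: there exists X = (d, (b₁,c₁,...,bₙ,cₙ), a) with Q(X) = 2ad + Σ_k (b_k²+c_k²)/λ_k > 0 such that γ_X(s) ∉ Γ for every s > 0. -/
open Real

noncomputable section

/-- For any lattice `Γ` of `Osc_n(λ₁,…,λₙ)` there is a non-closed (open)
spacelike geodesic in the quotient. -/
theorem stmt_5 {n : ℕ} (lam : Fin n → ℝ) (hlam : ∀ i, 0 < lam i)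
    (Γ : Set (OscG n)) (hΓ : IsLattice lam Γ) :
    ∃ (d a : ℝ) (b c : Fin n → ℝ),
      Qform lam d a b c > 0 ∧ ∀ s > (0 : ℝ), geo lam d b c a s ∉ Γ := by
  -- Γ is countable (discrete subset of a second-countable space)
  have hΓc : Γ.Countable := by
    rw [← Set.countable_coe_iff]
    have := hΓ.discrete
    exact (TopologicalSpace.separableSpace_iff_countable.mp inferInstance)
  -- the countable set of "bad" slopes
  set D : Set ℝ := (fun g : OscG n => g.1 / g.2.2) '' Γ with hD
  have hDc : D.Countable := hΓc.image _
  -- pick d > 0 with d ∉ D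
  obtain ⟨d, hdD, hd0⟩ : ∃ d, d ∉ D ∧ d ∈ Set.Ioi (0 : ℝ) := by
    rcases (hDc.dense_compl ℝ).exists_mem_open isOpen_Ioi (Set.nonempty_Ioi) with ⟨d, hd1, hd2⟩
    exact ⟨d, hd1, hd2⟩
  refine ⟨d, 1, 0, 0, ?_, ?_⟩
  · simp [Qform]
    exact hd0
  · intro s hs hmem
    have hgeo : geo lam d 0 0 1 s = (d * s, fun _ => (0, 0), s) := by
      simp [geo]
    rw [hgeo] at hmem
    apply hdD
    refine ⟨(d * s, fun _ => (0, 0), s), hmem, ?_⟩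
    field_simp
end
end

section
/- Let k be a positive integer and let Λ_{k,0} = (1/(2k))ℤ × ℤ² × 2πℤ, a lattice of Osc₁(1). Then the normalizer of Λ_{k,0} in Osc₁(1) is N(Λ_{k,0}) = ℝ × (1/(2k))ℤ² × (π/2)ℤ, i.e. an element g = (z, v, t) ∈ Osc₁(1) satisfies gΛ_{k,0}g⁻¹ = Λ_{k,0} if and only if v ∈ (1/(2k))ℤ² and t ∈ (π/2)ℤ. -/
open Real

noncomputable section

/-- conjugation `γ ↦ g γ g⁻¹` in the oscillator group -/
def oscConj {n : ℕ} (lam : Fin n → ℝ) (g : OscG n) : OscG n → OscG n :=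
  fun γ => oscMul lam (oscMul lam g γ) (oscInv lam g)

/-- the lattice `(1/(2k))ℤ × ℤ² × Tℤ` of `Osc₁(1)` -/
def Lam1 (k : ℕ) (T : ℝ) : Set (OscG 1) :=
  {g | (∃ m : ℤ, g.1 = m / (2 * k)) ∧ (∃ a : ℤ, (g.2.1 0).1 = a)
    ∧ (∃ b : ℤ, (g.2.1 0).2 = b) ∧ (∃ c : ℤ, g.2.2 = c * T)}


lemma sin_int_two_pi (c : ℤ) : Real.sin ((c:ℝ)*(2*π)) = 0 := by
  simpa using Real.sin_add_int_mul_two_pi 0 c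

lemma cos_int_two_pi (c : ℤ) : Real.cos ((c:ℝ)*(2*π)) = 1 := by
  simpa using Real.cos_add_int_mul_two_pi 0 c

lemma int_cos_sin (m : ℤ) :
    (∃ A : ℤ, Real.cos ((m:ℝ)*(π/2)) = A) ∧ ∃ B : ℤ, Real.sin ((m:ℝ)*(π/2)) = B := by
  obtain ⟨q, r, hr0, hr4, hm⟩ : ∃ q r : ℤ, 0 ≤ r ∧ r < 4 ∧ m = 4*q + r :=
    ⟨m/4, m%4, Int.emod_nonneg _ (by norm_num), by omega, by omega⟩
  have harg : (m:ℝ)*(π/2) = (r:ℝ)*(π/2) + (q:ℝ)*(2*π) := by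
    rw [hm]; push_cast; ring
  rw [harg, Real.cos_add_int_mul_two_pi, Real.sin_add_int_mul_two_pi]
  interval_cases r
  · exact ⟨⟨1, by norm_num⟩, ⟨0, by norm_num⟩⟩
  · refine ⟨⟨0, ?_⟩, ⟨1, ?_⟩⟩ <;> norm_num
  · have : ((2:ℤ):ℝ)*(π/2) = π := by push_cast; ring
    rw [this]; exact ⟨⟨-1, by norm_num⟩, ⟨0, by norm_num⟩⟩
  · have : ((3:ℤ):ℝ)*(π/2) = π + π/2 := by push_cast; ring
    rw [this, Real.cos_add, Real.sin_add]
    refine ⟨⟨0, ?_⟩, ⟨-1, ?_⟩⟩ <;> norm_num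

lemma eq_int_mul_pi_div_two (t : ℝ) (A B : ℤ) (hA : Real.cos t = A) (hB : Real.sin t = B) :
    ∃ m : ℤ, t = (m:ℝ) * (π/2) := by
  have hpy : (B:ℝ)^2 + (A:ℝ)^2 = 1 := by
    rw [← hA, ← hB]; exact Real.sin_sq_add_cos_sq t
  have hint : B^2 + A^2 = 1 := by exact_mod_cast hpy
  have hcase : A = 0 ∨ B = 0 := by
    have h1 : A^2 ≤ 1 := by nlinarith [sq_nonneg B]
    have h2 : B^2 ≤ 1 := by nlinarith [sq_nonneg A]
    have a1 : -1 ≤ A := by nlinarith [sq_nonneg (A+1)]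
    have a2 : A ≤ 1 := by nlinarith [sq_nonneg (A-1)]
    have b1 : -1 ≤ B := by nlinarith [sq_nonneg (B+1)]
    have b2 : B ≤ 1 := by nlinarith [sq_nonneg (B-1)]
    interval_cases A <;> interval_cases B <;> simp_all
  rcases hcase with h | h
  · rw [h] at hA; push_cast at hA
    obtain ⟨n, hn⟩ := Real.cos_eq_zero_iff.mp hA
    exact ⟨2*n+1, by rw [hn]; push_cast; ring⟩
  · rw [h] at hB; push_cast at hB
    obtain ⟨n, hn⟩ := Real.sin_eq_zero_iff.mp hB
    exact ⟨2*n, by rw [← hn]; push_cast; ring⟩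

lemma conj_formula (g γ : OscG 1) (hs : Real.sin γ.2.2 = 0) (hc : Real.cos γ.2.2 = 1) :
    oscConj (fun _ => (1:ℝ)) g γ =
      (γ.1 + (g.2.1 0).1 * (Real.sin g.2.2 * (γ.2.1 0).1 + Real.cos g.2.2 * (γ.2.1 0).2)
           - (g.2.1 0).2 * (Real.cos g.2.2 * (γ.2.1 0).1 - Real.sin g.2.2 * (γ.2.1 0).2),
       fun _ => (Real.cos g.2.2 * (γ.2.1 0).1 - Real.sin g.2.2 * (γ.2.1 0).2,
                 Real.sin g.2.2 * (γ.2.1 0).1 + Real.cos g.2.2 * (γ.2.1 0).2),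
       γ.2.2) := by
  have hpy := Real.sin_sq_add_cos_sq g.2.2
  simp only [oscConj, oscMul, oscInv, rot, dot2, Jpair, Fin.sum_univ_one, one_mul,
    Real.cos_add, Real.sin_add, Real.cos_neg, Real.sin_neg, hs, hc,
    Prod.fst_add, Prod.snd_add, Prod.fst_neg, Prod.snd_neg]
  refine Prod.ext ?_ (Prod.ext (funext fun i => ?_) ?_)
  · simp only
    linear_combination ((1:ℝ)/2) * ((g.2.1 0).1 * (Real.sin g.2.2 * (γ.2.1 0).1
      + Real.cos g.2.2 * (γ.2.1 0).2)
      - (g.2.1 0).2 * (Real.cos g.2.2 * (γ.2.1 0).1 - Real.sin g.2.2 * (γ.2.1 0).2)) * hpy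
  · have hi : i = 0 := Subsingleton.elim i 0
    subst hi
    refine Prod.ext ?_ ?_
    · simp only [Prod.fst_add, Prod.snd_add, Prod.fst_neg, Prod.snd_neg]
      linear_combination (-(g.2.1 0).1) * hpy
    · simp only [Prod.fst_add, Prod.snd_add, Prod.fst_neg, Prod.snd_neg]
      linear_combination (-(g.2.1 0).2) * hpy
  · simp only []
    ring

/-- The normalizer of the lattice `Λ_{k,0} = (1/(2k))ℤ × ℤ² × 2πℤ` in `Osc₁(1)`
is `ℝ × (1/(2k))ℤ² × (π/2)ℤ`. -/
theorem stmt_13 (k : ℕ) (hk : 0 < k) (g : OscG 1) :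
    oscConj (fun _ => (1 : ℝ)) g '' Lam1 k (2 * Real.pi) = Lam1 k (2 * Real.pi) ↔
      ((∃ m : ℤ, (g.2.1 0).1 = m / (2 * k)) ∧ (∃ m : ℤ, (g.2.1 0).2 = m / (2 * k))
        ∧ ∃ m : ℤ, g.2.2 = m * (Real.pi / 2)) := by
  have hk2 : (2*(k:ℝ)) ≠ 0 := by positivity
  constructor
  · intro h
    -- test elements
    set γ1 : OscG 1 := ((0:ℝ), fun _ => ((1:ℝ),(0:ℝ)), (0:ℝ)) with hγ1
    set γ2 : OscG 1 := ((0:ℝ), fun _ => ((0:ℝ),(1:ℝ)), (0:ℝ)) with hγ2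
    have hmem1 : γ1 ∈ Lam1 k (2*π) :=
      ⟨⟨0, by simp [hγ1]⟩, ⟨1, by simp [hγ1]⟩, ⟨0, by simp [hγ1]⟩, ⟨0, by simp [hγ1]⟩⟩
    have hmem2 : γ2 ∈ Lam1 k (2*π) :=
      ⟨⟨0, by simp [hγ2]⟩, ⟨0, by simp [hγ2]⟩, ⟨1, by simp [hγ2]⟩, ⟨0, by simp [hγ2]⟩⟩
    have h1 : oscConj (fun _ => (1:ℝ)) g γ1 ∈ Lam1 k (2*π) := by
      rw [← h]; exact Set.mem_image_of_mem _ hmem1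
    have h2 : oscConj (fun _ => (1:ℝ)) g γ2 ∈ Lam1 k (2*π) := by
      rw [← h]; exact Set.mem_image_of_mem _ hmem2
    rw [conj_formula g γ1 (by simp [hγ1]) (by simp [hγ1])] at h1
    rw [conj_formula g γ2 (by simp [hγ2]) (by simp [hγ2])] at h2
    simp only [Lam1, Set.mem_setOf_eq, hγ1, hγ2] at h1 h2
    norm_num at h1 h2
    obtain ⟨⟨m1', hE1⟩, ⟨A, hA⟩, ⟨B, hB⟩⟩ := h1
    obtain ⟨⟨m2', hE2⟩, -, -⟩ := h2
    have hA' : Real.cos g.2.2 = A := by linear_combination hA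
    have hB' : Real.sin g.2.2 = B := by linear_combination hB
    have hpy : (B:ℝ)^2 + (A:ℝ)^2 = 1 := by
      rw [← hA', ← hB']; exact Real.sin_sq_add_cos_sq g.2.2
    rw [hA', hB'] at hE1 hE2
    refine ⟨⟨A*m2' + B*m1', ?_⟩, ⟨B*m2' - A*m1', ?_⟩,
      eq_int_mul_pi_div_two _ A B hA' hB'⟩
    · push_cast
      linear_combination (A:ℝ)*hE2 + (B:ℝ)*hE1 - (g.2.1 0).1*hpy
    · push_cast
      linear_combination (B:ℝ)*hE2 - (A:ℝ)*hE1 - (g.2.1 0).2*hpy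
  · rintro ⟨⟨m1, hv1⟩, ⟨m2, hv2⟩, ⟨m, ht⟩⟩
    obtain ⟨⟨A, hA⟩, ⟨B, hB⟩⟩ := int_cos_sin m
    rw [← ht] at hA hB
    have hpy : Real.sin g.2.2 ^ 2 + Real.cos g.2.2 ^ 2 = 1 := Real.sin_sq_add_cos_sq _
    apply Set.Subset.antisymm
    · rintro δ ⟨γ, hγ, rfl⟩
      obtain ⟨⟨p, hw⟩, ⟨a, hu1⟩, ⟨b, hu2⟩, ⟨c, hsγ⟩⟩ := hγ
      have hs0 : Real.sin γ.2.2 = 0 := by rw [hsγ]; exact sin_int_two_pi c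
      have hc1 : Real.cos γ.2.2 = 1 := by rw [hsγ]; exact cos_int_two_pi c
      rw [conj_formula g γ hs0 hc1]
      simp only [Lam1, Set.mem_setOf_eq]
      refine ⟨⟨p + m1*(B*a + A*b) - m2*(A*a - B*b), ?_⟩, ⟨A*a - B*b, ?_⟩,
        ⟨B*a + A*b, ?_⟩, ⟨c, hsγ⟩⟩
      · rw [hw, hu1, hu2, hA, hB, hv1, hv2]; push_cast; field_simp; try ring
      · rw [hu1, hu2, hA, hB]; push_cast; ring
      · rw [hu1, hu2, hA, hB]; push_cast; ring
    · intro δ hδ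
      obtain ⟨⟨p, hw⟩, ⟨a, hu1⟩, ⟨b, hu2⟩, ⟨c, hsδ⟩⟩ := hδ
      refine ⟨(δ.1 - ((g.2.1 0).1 * (δ.2.1 0).2 - (g.2.1 0).2 * (δ.2.1 0).1),
           fun _ => (Real.cos g.2.2 * (δ.2.1 0).1 + Real.sin g.2.2 * (δ.2.1 0).2,
                     -Real.sin g.2.2 * (δ.2.1 0).1 + Real.cos g.2.2 * (δ.2.1 0).2),
           δ.2.2), ?_, ?_⟩
      · simp only [Lam1, Set.mem_setOf_eq]
        refine ⟨⟨p - (m1*b - m2*a), ?_⟩, ⟨A*a + B*b, ?_⟩, ⟨-B*a + A*b, ?_⟩, ⟨c, hsδ⟩⟩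
        · rw [hw, hu1, hu2, hv1, hv2]; push_cast; field_simp; try ring
        · rw [hu1, hu2, hA, hB]; push_cast; ring
        · rw [hu1, hu2, hA, hB]; push_cast; ring
      · have hs0 : Real.sin ((δ.1 - ((g.2.1 0).1 * (δ.2.1 0).2 - (g.2.1 0).2 * (δ.2.1 0).1),
           fun _ => (Real.cos g.2.2 * (δ.2.1 0).1 + Real.sin g.2.2 * (δ.2.1 0).2,
                     -Real.sin g.2.2 * (δ.2.1 0).1 + Real.cos g.2.2 * (δ.2.1 0).2),
           δ.2.2) : OscG 1).2.2 = 0 := by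
          show Real.sin δ.2.2 = 0
          rw [hsδ]; exact sin_int_two_pi c
        have hc1 : Real.cos ((δ.1 - ((g.2.1 0).1 * (δ.2.1 0).2 - (g.2.1 0).2 * (δ.2.1 0).1),
           fun _ => (Real.cos g.2.2 * (δ.2.1 0).1 + Real.sin g.2.2 * (δ.2.1 0).2,
                     -Real.sin g.2.2 * (δ.2.1 0).1 + Real.cos g.2.2 * (δ.2.1 0).2),
           δ.2.2) : OscG 1).2.2 = 1 := by
          show Real.cos δ.2.2 = 1
          rw [hsδ]; exact cos_int_two_pi c
        rw [conj_formula _ _ hs0 hc1]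
        refine Prod.ext ?_ (Prod.ext (funext fun i => ?_) ?_)
        · simp only
          linear_combination ((g.2.1 0).1 * (δ.2.1 0).2 - (g.2.1 0).2 * (δ.2.1 0).1) * hpy
        · have hi : i = 0 := Subsingleton.elim i 0
          subst hi
          refine Prod.ext ?_ ?_
          · simp only
            linear_combination (δ.2.1 0).1 * hpy
          · simp only
            linear_combination (δ.2.1 0).2 * hpy
        · rfl
end
end

section
/- Let k be a positive integer and let Λ_{k,π} = (1/(2k))ℤ × ℤ² × πℤ, a lattice of Osc₁(1). Then the normalizer of Λ_{k,π} in Osc₁(1) is N(Λ_{k,π}) = ℝ × (1/2)ℤ² × (π/2)ℤ, i.e. an element g = (z, v, t) ∈ Osc₁(1) satisfies gΛ_{k,π}g⁻¹ = Λ_{k,π} if and only if v ∈ (1/2)ℤ² and t ∈ (π/2)ℤ. -/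
open Real

noncomputable section

lemma conj_formula_s14 (z w t s : ℝ) (v u : Fin 1 → ℝ × ℝ) :
    oscConj (fun _ => (1:ℝ)) (z, v, t) (w, u, s) =
      (w + 1/2 * ((v 0).1 * (Real.sin t * (u 0).1 + Real.cos t * (u 0).2)
            - (v 0).2 * (Real.cos t * (u 0).1 - Real.sin t * (u 0).2))
         - 1/2 * ((v 0).1^2 + (v 0).2^2) * Real.sin s
         - 1/2 * ((Real.cos t * (u 0).1 - Real.sin t * (u 0).2) * (Real.sin s * (v 0).1 + Real.cos s * (v 0).2)
            - (Real.sin t * (u 0).1 + Real.cos t * (u 0).2) * (Real.cos s * (v 0).1 - Real.sin s * (v 0).2)),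
       fun _ => ((v 0).1 + (Real.cos t * (u 0).1 - Real.sin t * (u 0).2) - (Real.cos s * (v 0).1 - Real.sin s * (v 0).2),
                 (v 0).2 + (Real.sin t * (u 0).1 + Real.cos t * (u 0).2) - (Real.sin s * (v 0).1 + Real.cos s * (v 0).2)),
       s) := by
  have pyt := Real.sin_sq_add_cos_sq t
  refine Prod.ext ?_ (Prod.ext ?_ ?_)
  · simp only [oscConj, oscMul, oscInv, rot, Jpair, dot2, Fin.sum_univ_one, one_mul,
      Real.cos_add, Real.sin_add, Real.cos_neg, Real.sin_neg,
      Prod.fst_add, Prod.snd_add, Prod.fst_neg, Prod.snd_neg]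
    linear_combination ((1:ℝ)/2) * (-(((v 0).1 + (Real.cos t*(u 0).1 - Real.sin t*(u 0).2)) * (Real.sin s*(v 0).1 + Real.cos s*(v 0).2)) + ((v 0).2 + (Real.sin t*(u 0).1 + Real.cos t*(u 0).2)) * (Real.cos s*(v 0).1 - Real.sin s*(v 0).2)) * pyt
  · funext i
    rw [Subsingleton.elim i 0]
    simp only [oscConj, oscMul, oscInv, rot, Jpair, dot2, Fin.sum_univ_one, one_mul,
      Real.cos_add, Real.sin_add, Real.cos_neg, Real.sin_neg,
      Prod.fst_add, Prod.snd_add, Prod.fst_neg, Prod.snd_neg]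
    refine Prod.ext ?_ ?_
    · show _ = _
      simp only [Prod.fst_add, Prod.snd_add, Prod.fst_neg, Prod.snd_neg]
      linear_combination ((v 0).2 * Real.sin s - (v 0).1 * Real.cos s) * pyt
    · show _ = _
      simp only [Prod.fst_add, Prod.snd_add, Prod.fst_neg, Prod.snd_neg]
      linear_combination (-((v 0).1 * Real.sin s + (v 0).2 * Real.cos s)) * pyt
  · simp [oscConj, oscMul, oscInv]

lemma cos_sin_int_pi (c : ℤ) : ∃ d : ℤ, Real.cos (c * Real.pi) = 1 - 2*d ∧ Real.sin (c * Real.pi) = 0 := by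
  have hs := Real.sin_int_mul_pi c
  have hc : Real.cos (c * Real.pi) = (-1)^c := by
    have := Real.cos_add_int_mul_pi 0 c
    simpa using this
  rcases Int.even_or_odd c with hce | hco
  · exact ⟨0, by rw [hc, hce.neg_one_zpow]; push_cast; ring, hs⟩
  · refine ⟨1, ?_, hs⟩
    rw [hc, Odd.neg_one_zpow hco]; push_cast; ring

lemma cos_sin_quarter (m : ℤ) : ∃ p q : ℤ, Real.cos (m * (Real.pi/2)) = p ∧ Real.sin (m * (Real.pi/2)) = q := by
  rcases Int.even_or_odd m with ⟨j, hj⟩ | ⟨j, hj⟩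
  · have hang : (m : ℝ) * (Real.pi/2) = j * Real.pi := by rw [hj]; push_cast; ring
    obtain ⟨d, hd, hd0⟩ := cos_sin_int_pi j
    exact ⟨1 - 2*d, 0, by rw [hang, hd]; push_cast; ring, by rw [hang, hd0]; norm_num⟩
  · have hang : (m : ℝ) * (Real.pi/2) = j * Real.pi + Real.pi/2 := by rw [hj]; push_cast; ring
    obtain ⟨d, hd, hd0⟩ := cos_sin_int_pi j
    refine ⟨0, 1 - 2*d, ?_, ?_⟩
    · rw [hang, Real.cos_add, hd0, Real.cos_pi_div_two]; push_cast; ring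
    · rw [hang, Real.sin_add, hd, hd0, Real.cos_pi_div_two, Real.sin_pi_div_two]; push_cast; ring

lemma quarter_of_int (t : ℝ) (p q : ℤ) (hp : Real.cos t = p) (hq : Real.sin t = q) :
    ∃ m : ℤ, t = m * (Real.pi/2) := by
  by_cases hq0 : q = 0
  · rw [hq0] at hq
    obtain ⟨n, hn⟩ := Real.sin_eq_zero_iff.mp (by simpa using hq)
    exact ⟨2*n, by push_cast; linarith⟩
  · have hsum : (q:ℝ)^2 + (p:ℝ)^2 = 1 := by
      rw [← hp, ← hq]; exact Real.sin_sq_add_cos_sq t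
    have hsumz : q^2 + p^2 = 1 := by exact_mod_cast hsum
    have hq1 : 1 ≤ q^2 := by
      have := sq_pos_of_ne_zero hq0
      omega
    have hp0 : p = 0 := by nlinarith [sq_nonneg p]
    rw [hp0] at hp
    obtain ⟨n, hn⟩ := Real.cos_eq_zero_iff.mp (by simpa using hp)
    exact ⟨2*n+1, by rw [hn]; push_cast; ring⟩

lemma osc_assoc (a b c : OscG 1) :
    oscMul (fun _ => (1:ℝ)) (oscMul (fun _ => (1:ℝ)) a b) c
      = oscMul (fun _ => (1:ℝ)) a (oscMul (fun _ => (1:ℝ)) b c) := by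
  have pyt := Real.sin_sq_add_cos_sq a.2.2
  refine Prod.ext ?_ (Prod.ext ?_ ?_)
  · simp only [oscMul, rot, Jpair, dot2, Fin.sum_univ_one, one_mul, Real.cos_add,
      Real.sin_add, Prod.fst_add, Prod.snd_add]
    linear_combination ((1:ℝ)/2) * ((b.2.1 0).1 * (Real.sin b.2.2 * (c.2.1 0).1 + Real.cos b.2.2 * (c.2.1 0).2) - (b.2.1 0).2 * (Real.cos b.2.2 * (c.2.1 0).1 - Real.sin b.2.2 * (c.2.1 0).2)) * pyt
  · funext i
    rw [Subsingleton.elim i 0]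
    refine Prod.ext ?_ ?_ <;>
      simp only [oscMul, rot, Jpair, dot2, Fin.sum_univ_one, one_mul, Real.cos_add,
        Real.sin_add, Prod.fst_add, Prod.snd_add] <;> ring
  · simp only [oscMul]; ring

lemma osc_mul_inv (g : OscG 1) :
    oscMul (fun _ => (1:ℝ)) g (oscInv (fun _ => (1:ℝ)) g) = oscOne 1 := by
  have pyt := Real.sin_sq_add_cos_sq g.2.2
  refine Prod.ext ?_ (Prod.ext ?_ ?_)
  · simp only [oscMul, oscInv, oscOne, rot, Jpair, dot2, Fin.sum_univ_one, one_mul,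
      Real.cos_neg, Real.sin_neg, Prod.fst_add, Prod.snd_add, Prod.fst_neg, Prod.snd_neg]
    ring
  · funext i
    rw [Subsingleton.elim i 0]
    refine Prod.ext ?_ ?_ <;>
      simp only [oscMul, oscInv, oscOne, rot, Jpair, dot2, Fin.sum_univ_one, one_mul,
        Real.cos_neg, Real.sin_neg, Prod.fst_add, Prod.snd_add, Prod.fst_neg, Prod.snd_neg]
    · linear_combination (-(g.2.1 0).1) * pyt
    · linear_combination (-(g.2.1 0).2) * pyt
  · simp only [oscMul, oscInv, oscOne]; ring

lemma osc_inv_mul (g : OscG 1) :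
    oscMul (fun _ => (1:ℝ)) (oscInv (fun _ => (1:ℝ)) g) g = oscOne 1 := by
  refine Prod.ext ?_ (Prod.ext ?_ ?_)
  · simp only [oscMul, oscInv, oscOne, rot, Jpair, dot2, Fin.sum_univ_one, one_mul,
      Real.cos_neg, Real.sin_neg, Prod.fst_add, Prod.snd_add, Prod.fst_neg, Prod.snd_neg]
    ring
  · funext i
    rw [Subsingleton.elim i 0]
    refine Prod.ext ?_ ?_ <;>
      simp only [oscMul, oscInv, oscOne, rot, Jpair, dot2, Fin.sum_univ_one, one_mul,
        Real.cos_neg, Real.sin_neg, Prod.fst_add, Prod.snd_add, Prod.fst_neg, Prod.snd_neg] <;> ring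
  · simp only [oscMul, oscInv, oscOne]; ring

lemma osc_one_mul (g : OscG 1) : oscMul (fun _ => (1:ℝ)) (oscOne 1) g = g := by
  refine Prod.ext ?_ (Prod.ext ?_ ?_)
  · simp only [oscMul, oscOne, rot, Jpair, dot2, Fin.sum_univ_one, one_mul,
      Real.cos_zero, Real.sin_zero, Prod.fst_add, Prod.snd_add]
    ring
  · funext i
    rw [Subsingleton.elim i 0]
    refine Prod.ext ?_ ?_ <;>
      simp [oscMul, oscOne, rot]
  · simp only [oscMul, oscOne]; ring

lemma osc_mul_one (g : OscG 1) : oscMul (fun _ => (1:ℝ)) g (oscOne 1) = g := by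
  refine Prod.ext ?_ (Prod.ext ?_ ?_)
  · simp [oscMul, oscOne, rot, Jpair, dot2, Fin.sum_univ_one]
  · funext i
    rw [Subsingleton.elim i 0]
    refine Prod.ext ?_ ?_ <;> simp [oscMul, oscOne, rot]
  · simp [oscMul, oscOne]

lemma osc_inv_inv (g : OscG 1) :
    oscInv (fun _ => (1:ℝ)) (oscInv (fun _ => (1:ℝ)) g) = g := by
  have pyt := Real.sin_sq_add_cos_sq g.2.2
  refine Prod.ext ?_ (Prod.ext ?_ ?_)
  · simp [oscInv]
  · funext i
    rw [Subsingleton.elim i 0]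
    refine Prod.ext ?_ ?_ <;>
      simp only [oscInv, rot, one_mul, neg_neg, Real.cos_neg, Real.sin_neg,
        Prod.fst_neg, Prod.snd_neg]
    · linear_combination (g.2.1 0).1 * pyt
    · linear_combination (g.2.1 0).2 * pyt
  · simp [oscInv]

lemma osc_conj_conj_inv (g γ : OscG 1) :
    oscConj (fun _ => (1:ℝ)) g (oscConj (fun _ => (1:ℝ)) (oscInv (fun _ => (1:ℝ)) g) γ) = γ := by
  simp only [oscConj, osc_inv_inv]
  rw [← osc_assoc, ← osc_assoc, osc_mul_inv, osc_one_mul, osc_assoc, osc_mul_inv, osc_mul_one]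

lemma conj_mem (k : ℕ) (hk : 0 < k) (z t : ℝ) (v : Fin 1 → ℝ × ℝ) (m1 m2 m3 : ℤ)
    (hx : (v 0).1 = m1/2) (hy : (v 0).2 = m2/2) (ht : t = m3 * (Real.pi/2)) :
    ∀ γ ∈ Lam1 k Real.pi, oscConj (fun _ => (1:ℝ)) (z, v, t) γ ∈ Lam1 k Real.pi := by
  rintro ⟨w, u, s⟩ ⟨⟨m, hw⟩, ⟨a, ha⟩, ⟨b, hb⟩, ⟨c, hc⟩⟩
  simp only at hw ha hb hc
  obtain ⟨p, q, hp, hq⟩ := cos_sin_quarter m3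
  rw [← ht] at hp hq
  obtain ⟨d, hd, hd0⟩ := cos_sin_int_pi c
  rw [← hc] at hd hd0
  have hk' : (k:ℝ) ≠ 0 := Nat.cast_ne_zero.mpr hk.ne'
  rw [conj_formula_s14]
  refine ⟨⟨m + (1-d)*(m1*(q*a+p*b) - m2*(p*a - q*b))*k, ?_⟩,
          ⟨d*m1 + (p*a - q*b), ?_⟩, ⟨d*m2 + (q*a + p*b), ?_⟩, ⟨c, ?_⟩⟩
  · simp only
    rw [hw, ha, hb, hx, hy, hp, hq, hd, hd0]
    push_cast
    field_simp
    ring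
  · simp only
    rw [ha, hb, hx, hy, hp, hq, hd, hd0]
    push_cast
    ring
  · simp only
    rw [ha, hb, hx, hy, hp, hq, hd, hd0]
    push_cast
    ring
  · exact hc

/-- The normalizer of the lattice `Λ_{k,π} = (1/(2k))ℤ × ℤ² × πℤ` in `Osc₁(1)`
is `ℝ × (1/2)ℤ² × (π/2)ℤ`. -/
theorem stmt_14 (k : ℕ) (hk : 0 < k) (g : OscG 1) :
    oscConj (fun _ => (1 : ℝ)) g '' Lam1 k Real.pi = Lam1 k Real.pi ↔
      ((∃ m : ℤ, (g.2.1 0).1 = m / 2) ∧ (∃ m : ℤ, (g.2.1 0).2 = m / 2)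
        ∧ ∃ m : ℤ, g.2.2 = m * (Real.pi / 2)) := by
  obtain ⟨z, v, t⟩ := g
  constructor
  · intro h
    have hsub : ∀ γ ∈ Lam1 k Real.pi, oscConj (fun _ => (1:ℝ)) (z, v, t) γ ∈ Lam1 k Real.pi :=
      fun γ hγ => h ▸ Set.mem_image_of_mem _ hγ
    have m2mem : ((0:ℝ), (fun _ => ((0:ℝ),(0:ℝ)) : Fin 1 → ℝ × ℝ), Real.pi) ∈ Lam1 k Real.pi :=
      ⟨⟨0, by norm_num⟩, ⟨0, by norm_num⟩, ⟨0, by norm_num⟩, ⟨1, by norm_num⟩⟩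
    have c2 := hsub _ m2mem
    rw [conj_formula_s14] at c2
    obtain ⟨-, ⟨a2, ha2⟩, ⟨b2, hb2⟩, -⟩ := c2
    simp only [Real.cos_pi, Real.sin_pi] at ha2 hb2
    have m1mem : ((0:ℝ), (fun _ => ((1:ℝ),(0:ℝ)) : Fin 1 → ℝ × ℝ), (0:ℝ)) ∈ Lam1 k Real.pi :=
      ⟨⟨0, by norm_num⟩, ⟨1, by norm_num⟩, ⟨0, by norm_num⟩, ⟨0, by norm_num⟩⟩
    have c1 := hsub _ m1mem
    rw [conj_formula_s14] at c1
    obtain ⟨-, ⟨p, hp⟩, ⟨q, hq⟩, -⟩ := c1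
    simp only [Real.cos_zero, Real.sin_zero] at hp hq
    have hp' : Real.cos t = p := by linarith [hp]
    have hq' : Real.sin t = q := by linarith [hq]
    exact ⟨⟨a2, by show (v 0).1 = _; linarith [ha2]⟩,
           ⟨b2, by show (v 0).2 = _; linarith [hb2]⟩,
           quarter_of_int t p q hp' hq'⟩
  · rintro ⟨⟨m1, hx⟩, ⟨m2, hy⟩, ⟨m3, ht⟩⟩
    have hx : (v 0).1 = m1/2 := hx
    have hy : (v 0).2 = m2/2 := hy
    have ht : t = m3 * (Real.pi/2) := ht
    apply Set.Subset.antisymm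
    · rintro x ⟨γ, hγ, rfl⟩
      exact conj_mem k hk z t v m1 m2 m3 hx hy ht γ hγ
    · intro γ hγ
      obtain ⟨p, q, hp, hq⟩ := cos_sin_quarter m3
      rw [← ht] at hp hq
      refine ⟨oscConj (fun _ => (1:ℝ)) (oscInv (fun _ => (1:ℝ)) (z, v, t)) γ, ?_,
        osc_conj_conj_inv _ _⟩
      have hinv : oscInv (fun _ => (1:ℝ)) (z, v, t)
          = (-z, fun i => -(rot (1 * -t) (v i)), -t) := rfl
      rw [hinv]
      refine conj_mem k hk (-z) (-t) _ (-(p*m1+q*m2)) (q*m1 - p*m2) (-m3) ?_ ?_ ?_ γ hγ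
      · show -(Real.cos (1 * -t) * (v 0).1 - Real.sin (1 * -t) * (v 0).2) = _
        simp only [one_mul, Real.cos_neg, Real.sin_neg]
        rw [hp, hq, hx, hy]; push_cast; ring
      · show -(Real.sin (1 * -t) * (v 0).1 + Real.cos (1 * -t) * (v 0).2) = _
        simp only [one_mul, Real.cos_neg, Real.sin_neg]
        rw [hp, hq, hx, hy]; push_cast; ring
      · rw [ht]; push_cast; ring
end
end
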